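/- arXiv:2401.17708 — 2 statements merged into one kernel-verified Lean document; each statement's English description precedes it below -/
import Mathlib

section
/- For every continuous h: [0,∞) → ℝ^m and every φ ∈ BU with Dφ = h(0), there exists a continuous function x: ℝ → ℝ^m with x_0 = φ and Dx_t = h(t) for all t ≥ 0; that is, the nonhomogeneous equation Dx_t = h(t), t ≥ 0, with initial condition x_0 = φ, has a solution defined for all t ≥ 0. -/
open MeasureTheory Filter Set

/-- `x` is bounded and uniformly continuous on `(-∞,0]` (membership in `BU`,
where only the restriction of `x` to `(-∞,0]` is relevant). -/
def IsBU (m : ℕ) (x : ℝ → Fin m → ℝ) : Prop :=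
  (∃ C : ℝ, ∀ s : ℝ, s ≤ 0 → ‖x s‖ ≤ C) ∧
  ∀ ε > (0:ℝ), ∃ δ > (0:ℝ), ∀ s : ℝ, s ≤ 0 → ∀ s' : ℝ, s' ≤ 0 →
    |s - s'| < δ → ‖x s - x s'‖ < ε

/-- the supremum norm `‖x‖_∞ = sup_{s ≤ 0} ‖x(s)‖`. -/
noncomputable def supNorm (m : ℕ) (x : ℝ → Fin m → ℝ) : ℝ :=
  ⨆ s : Set.Iic (0:ℝ), ‖x (s : ℝ)‖

/-- time shift: `shift m x t = x_t`, where `x_t(s) = x(t+s)`. -/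
def shift (m : ℕ) (x : ℝ → Fin m → ℝ) (t : ℝ) : ℝ → Fin m → ℝ :=
  fun s => x (t + s)

/-- The operator `Dx = x(0) - ∫_{-∞}^0 [dν(s)] x(s)`, where the matrix of real
(signed) Borel measures `ν` is given through a positive part `νp` and a
negative part `νn` (Jordan decomposition), i.e. `ν i j = νp i j - νn i j`. -/
noncomputable def Dop (m : ℕ) (νp νn : Fin m → Fin m → Measure ℝ)
    (x : ℝ → Fin m → ℝ) : Fin m → ℝ :=
  fun i => x 0 i - ∑ j : Fin m,
    ((∫ s in Set.Iic (0:ℝ), x s j ∂(νp i j)) - ∫ s in Set.Iic (0:ℝ), x s j ∂(νn i j))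

/-- the measures `ν_ij` have finite total variation and `|ν_ij|({0}) = 0`. -/
def NuCond (m : ℕ) (νp νn : Fin m → Fin m → Measure ℝ) : Prop :=
  (∀ i j, νp i j Set.univ ≠ ⊤) ∧ (∀ i j, νn i j Set.univ ≠ ⊤) ∧
  (∀ i j, νp i j {0} = 0) ∧ (∀ i j, νn i j {0} = 0)

/-- `D` is stable: there is a continuous `c : [0,∞) → [0,∞)` with `c(t) → 0`
as `t → ∞` such that every continuous `x : ℝ → ℝ^m` with `x_0 ∈ BU` and
`D x_t = 0` for all `t ≥ 0` satisfies `‖x(t)‖ ≤ c(t) ‖x_0‖_∞` for all `t ≥ 0`. -/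
def IsStableOp (m : ℕ) (D : (ℝ → Fin m → ℝ) → Fin m → ℝ) : Prop :=
  ∃ c : ℝ → ℝ, ContinuousOn c (Set.Ici 0) ∧ (∀ t : ℝ, 0 ≤ t → 0 ≤ c t) ∧
    Filter.Tendsto c Filter.atTop (nhds 0) ∧
    ∀ x : ℝ → Fin m → ℝ, Continuous x → IsBU m x →
      (∀ t : ℝ, 0 ≤ t → D (shift m x t) = 0) →
      ∀ t : ℝ, 0 ≤ t → ‖x t‖ ≤ c t * supNorm m x

/-- the convolution operator `D̂`, `(D̂x)(s) = D x_s`. -/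
noncomputable def Dhat (m : ℕ) (νp νn : Fin m → Fin m → Measure ℝ)
    (x : ℝ → Fin m → ℝ) : ℝ → Fin m → ℝ :=
  fun s => Dop m νp νn (shift m x s)

/-- the seminorm `‖x‖_n = sup_{s ∈ [-n,0]} ‖x(s)‖`. -/
noncomputable def normOn (m : ℕ) (n : ℕ) (x : ℝ → Fin m → ℝ) : ℝ :=
  ⨆ s : Set.Icc (-(n:ℝ)) 0, ‖x (s : ℝ)‖

/-- the compact-open metric
`d(x,y) = ∑_{n ≥ 1} 2⁻ⁿ ‖x-y‖_n / (1 + ‖x-y‖_n)`. -/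
noncomputable def coDist (m : ℕ) (x y : ℝ → Fin m → ℝ) : ℝ :=
  ∑' n : ℕ, (1/2 : ℝ)^(n+1) *
    (normOn m (n+1) (fun s => x s - y s)) / (1 + normOn m (n+1) (fun s => x s - y s))

/-- `sup_{0 ≤ u ≤ t} ‖h(u)‖`. -/
noncomputable def supOn (m : ℕ) (h : ℝ → Fin m → ℝ) (t : ℝ) : ℝ :=
  ⨆ u : Set.Icc (0:ℝ) t, ‖h (u : ℝ)‖

/-- the order `x ≤_D y`, i.e. `D x_s ≤ D y_s` (componentwise) for all `s ≤ 0`. -/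
def leD (m : ℕ) (νp νn : Fin m → Fin m → Measure ℝ) (x y : ℝ → Fin m → ℝ) : Prop :=
  ∀ s : ℝ, s ≤ 0 → ∀ i, Dhat m νp νn x s i ≤ Dhat m νp νn y s i

section AuxStatement1
variable {m : ℕ}

noncomputable def Kop (νp νn : Fin m → Fin m → Measure ℝ) (x : ℝ → Fin m → ℝ) (t : ℝ) :
    Fin m → ℝ :=
  fun i => ∑ j : Fin m, ((∫ s in Set.Iic (0:ℝ), x (t + s) j ∂(νp i j)) -
    ∫ s in Set.Iic (0:ℝ), x (t + s) j ∂(νn i j))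

noncomputable def mtot (νp νn : Fin m → Fin m → Measure ℝ) : ℝ :=
  ∑ i, ∑ j, (((νp i j) (Set.Iic 0)).toReal + ((νn i j) (Set.Iic 0)).toReal)

noncomputable def atot (νp νn : Fin m → Fin m → Measure ℝ) (δ : ℝ) : ℝ :=
  ∑ i, ∑ j, (((νp i j) (Set.Ioc (-δ) 0)).toReal + ((νn i j) (Set.Ioc (-δ) 0)).toReal)

lemma min_lip (a b : ℝ) : |min a 0 - min b 0| ≤ |a - b| := by
  rcases le_total a 0 with ha | ha <;> rcases le_total b 0 with hb | hb <;>
    simp [min_eq_left, min_eq_right, ha, hb] <;> rw [abs_le] <;>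
    constructor <;> cases abs_cases (a - b) <;> cases abs_cases a <;> cases abs_cases b <;> linarith

lemma integrable_slice (μ : Measure ℝ) [IsFiniteMeasure μ] {x : ℝ → Fin m → ℝ}
    (hx : Continuous x) {t C : ℝ} (hC : ∀ u ≤ t, ‖x u‖ ≤ C) (j : Fin m) :
    Integrable (fun s => x (t + s) j) (μ.restrict (Set.Iic 0)) := by
  refine Integrable.mono' (integrable_const C) ?_ ?_
  · exact ((continuous_apply j).comp (hx.comp (continuous_const.add continuous_id))).aestronglyMeasurable
  · filter_upwards [ae_restrict_mem measurableSet_Iic] with s hs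
    calc ‖x (t + s) j‖ ≤ ‖x (t + s)‖ := norm_le_pi_norm _ j
    _ ≤ C := hC _ (by simp only [Set.mem_Iic] at hs; linarith)

lemma single_est (μ : Measure ℝ) [IsFiniteMeasure μ] {Δ : ℝ → Fin m → ℝ}
    (hΔ : Continuous Δ) {γ δ M t : ℝ} (hγ : 0 ≤ γ) (hδ : 0 < δ) (hM : 0 ≤ M)
    (hb : ∀ u ≤ t, ‖Δ u‖ ≤ Real.exp (γ * u) * M) (j : Fin m) :
    |∫ s in Set.Iic (0:ℝ), Δ (t + s) j ∂μ| ≤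
      Real.exp (γ * t) * M *
        (Real.exp (-(γ * δ)) * (μ (Set.Iic 0)).toReal + (μ (Set.Ioc (-δ) 0)).toReal) := by
  have hbC : ∀ u ≤ t, ‖Δ u‖ ≤ Real.exp (γ * t) * M := fun u hu =>
    (hb u hu).trans (mul_le_mul_of_nonneg_right
      (Real.exp_le_exp.2 (mul_le_mul_of_nonneg_left hu hγ)) hM)
  have hint : Integrable (fun s => Δ (t + s) j) (μ.restrict (Set.Iic 0)) :=
    integrable_slice μ hΔ hbC j
  set κ := μ.restrict (Set.Iic (0:ℝ)) with hκ
  have hr1 : κ.restrict (Set.Iic (-δ)) = μ.restrict (Set.Iic (-δ)) := by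
    rw [hκ, Measure.restrict_restrict measurableSet_Iic, Set.Iic_inter_Iic,
      min_eq_left (by linarith)]
  have hr2 : κ.restrict (Set.Ioi (-δ)) = μ.restrict (Set.Ioc (-δ) 0) := by
    rw [hκ, Measure.restrict_restrict measurableSet_Ioi, Set.Ioi_inter_Iic]
  have hsplit : ∫ s in Set.Iic (0:ℝ), Δ (t + s) j ∂μ =
      (∫ s in Set.Iic (-δ), Δ (t + s) j ∂μ) + ∫ s in Set.Ioc (-δ) 0, Δ (t + s) j ∂μ := by
    have := (integral_add_compl (measurableSet_Iic (a := -δ)) hint).symm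
    rw [Set.compl_Iic] at this
    rw [show (∫ s in Set.Iic (0:ℝ), Δ (t + s) j ∂μ) = ∫ s, Δ (t + s) j ∂κ from rfl, this,
      show (∫ s in Set.Iic (-δ), Δ (t + s) j ∂κ) = ∫ s, Δ (t + s) j ∂(κ.restrict (Set.Iic (-δ))) from rfl,
      show (∫ s in Set.Ioi (-δ), Δ (t + s) j ∂κ) = ∫ s, Δ (t + s) j ∂(κ.restrict (Set.Ioi (-δ))) from rfl,
      hr1, hr2]
  have hB1 : ‖∫ s in Set.Iic (-δ), Δ (t + s) j ∂μ‖ ≤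
      (Real.exp (γ * t) * M * Real.exp (-(γ * δ))) * (μ (Set.Iic (-δ))).toReal := by
    refine norm_setIntegral_le_of_norm_le_const_ae' ((measure_lt_top μ _))
      (Eventually.of_forall fun s hs => ?_)
    simp only [Set.mem_Iic] at hs
    calc ‖Δ (t + s) j‖ ≤ ‖Δ (t + s)‖ := norm_le_pi_norm _ j
      _ ≤ Real.exp (γ * (t + s)) * M := hb _ (by linarith)
      _ ≤ Real.exp (γ * (t - δ)) * M := by
          apply mul_le_mul_of_nonneg_right _ hM
          exact Real.exp_le_exp.2 (mul_le_mul_of_nonneg_left (by linarith) hγ)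
      _ = Real.exp (γ * t) * M * Real.exp (-(γ * δ)) := by
          rw [mul_comm (Real.exp (γ * t)) M, mul_assoc, ← Real.exp_add]
          ring_nf
  have hB2 : ‖∫ s in Set.Ioc (-δ) 0, Δ (t + s) j ∂μ‖ ≤
      (Real.exp (γ * t) * M) * (μ (Set.Ioc (-δ) 0)).toReal := by
    refine norm_setIntegral_le_of_norm_le_const_ae' ((measure_lt_top μ _))
      (Eventually.of_forall fun s hs => ?_)
    calc ‖Δ (t + s) j‖ ≤ ‖Δ (t + s)‖ := norm_le_pi_norm _ j
      _ ≤ Real.exp (γ * t) * M := hbC _ (by linarith [hs.2])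
  have hmono : (μ (Set.Iic (-δ))).toReal ≤ (μ (Set.Iic 0)).toReal :=
    ENNReal.toReal_le_toReal (measure_lt_top μ _).ne (measure_lt_top μ _).ne |>.mpr
      (measure_mono (Set.Iic_subset_Iic.2 (by linarith)))
  have hE : 0 ≤ Real.exp (γ * t) * M := mul_nonneg (Real.exp_pos _).le hM
  calc |∫ s in Set.Iic (0:ℝ), Δ (t + s) j ∂μ|
      ≤ ‖∫ s in Set.Iic (-δ), Δ (t + s) j ∂μ‖ + ‖∫ s in Set.Ioc (-δ) 0, Δ (t + s) j ∂μ‖ := by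
        rw [hsplit]; exact (abs_add_le _ _)
    _ ≤ (Real.exp (γ * t) * M * Real.exp (-(γ * δ))) * (μ (Set.Iic 0)).toReal +
        (Real.exp (γ * t) * M) * (μ (Set.Ioc (-δ) 0)).toReal := by
        refine add_le_add (hB1.trans ?_) hB2
        exact mul_le_mul_of_nonneg_left hmono (by positivity)
    _ = Real.exp (γ * t) * M *
        (Real.exp (-(γ * δ)) * (μ (Set.Iic 0)).toReal + (μ (Set.Ioc (-δ) 0)).toReal) := by ring

lemma single_bound (μ : Measure ℝ) [IsFiniteMeasure μ] {z : ℝ → Fin m → ℝ}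
    {C : ℝ} (hC : ∀ u, ‖z u‖ ≤ C) (t : ℝ) (j : Fin m) :
    |∫ s in Set.Iic (0:ℝ), z (t + s) j ∂μ| ≤ C * (μ (Set.Iic 0)).toReal := by
  rw [← Real.norm_eq_abs]
  refine norm_setIntegral_le_of_norm_le_const_ae' ((measure_lt_top μ _))
    (Eventually.of_forall fun s _ => ?_)
  calc ‖z (t + s) j‖ ≤ ‖z (t + s)‖ := norm_le_pi_norm _ j
    _ ≤ C := hC _

lemma single_cont (μ : Measure ℝ) [IsFiniteMeasure μ] {z : ℝ → Fin m → ℝ}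
    (hz : Continuous z) {C : ℝ} (hC : ∀ u, ‖z u‖ ≤ C) (j : Fin m) :
    Continuous fun t => ∫ s in Set.Iic (0:ℝ), z (t + s) j ∂μ := by
  apply continuous_of_dominated (bound := fun _ => C)
  · intro t
    exact ((continuous_apply j).comp (hz.comp (continuous_const.add continuous_id))).aestronglyMeasurable
  · intro t
    refine Eventually.of_forall fun s => ?_
    calc ‖z (t + s) j‖ ≤ ‖z (t + s)‖ := norm_le_pi_norm _ j
      _ ≤ C := hC _
  · exact integrable_const C
  · refine Eventually.of_forall fun s => ?_
    exact (continuous_apply j).comp (hz.comp (continuous_id.add continuous_const))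

lemma Kop_est (νp νn : Fin m → Fin m → Measure ℝ)
    [∀ i j, IsFiniteMeasure (νp i j)] [∀ i j, IsFiniteMeasure (νn i j)]
    {Δ : ℝ → Fin m → ℝ} (hΔ : Continuous Δ) {γ δ M t : ℝ}
    (hγ : 0 ≤ γ) (hδ : 0 < δ) (hM : 0 ≤ M)
    (hb : ∀ u ≤ t, ‖Δ u‖ ≤ Real.exp (γ * u) * M)
    (hsmall : atot νp νn δ ≤ 1/2)
    (hγδ : Real.exp (-(γ * δ)) * mtot νp νn ≤ 1/4) (i : Fin m) :
    |Kop νp νn Δ t i| ≤ 3/4 * (Real.exp (γ * t) * M) := by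
  set E := Real.exp (γ * t) * M with hE
  have hEpos : 0 ≤ E := mul_nonneg (Real.exp_pos _).le hM
  have hexp : (0:ℝ) < Real.exp (-(γ * δ)) := Real.exp_pos _
  set P : Fin m → ℝ := fun j => ((νp i j) (Set.Iic 0)).toReal
  set N : Fin m → ℝ := fun j => ((νn i j) (Set.Iic 0)).toReal
  set AP : Fin m → ℝ := fun j => ((νp i j) (Set.Ioc (-δ) 0)).toReal
  set AN : Fin m → ℝ := fun j => ((νn i j) (Set.Ioc (-δ) 0)).toReal
  have h1 : |Kop νp νn Δ t i| ≤
      ∑ j, (E * (Real.exp (-(γ * δ)) * (P j + N j) + (AP j + AN j))) := by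
    refine (Finset.abs_sum_le_sum_abs _ _).trans (Finset.sum_le_sum fun j _ => ?_)
    calc |(∫ s in Set.Iic (0:ℝ), Δ (t + s) j ∂(νp i j)) -
          ∫ s in Set.Iic (0:ℝ), Δ (t + s) j ∂(νn i j)|
        ≤ |∫ s in Set.Iic (0:ℝ), Δ (t + s) j ∂(νp i j)| +
          |∫ s in Set.Iic (0:ℝ), Δ (t + s) j ∂(νn i j)| := abs_sub _ _
      _ ≤ E * (Real.exp (-(γ * δ)) * P j + AP j) + E * (Real.exp (-(γ * δ)) * N j + AN j) :=
          add_le_add (single_est (νp i j) hΔ hγ hδ hM hb j)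
            (single_est (νn i j) hΔ hγ hδ hM hb j)
      _ = E * (Real.exp (-(γ * δ)) * (P j + N j) + (AP j + AN j)) := by ring
  have h2 : ∑ j, (E * (Real.exp (-(γ * δ)) * (P j + N j) + (AP j + AN j)))
      = E * (Real.exp (-(γ * δ)) * (∑ j, (P j + N j)) + ∑ j, (AP j + AN j)) := by
    rw [← Finset.mul_sum, Finset.sum_add_distrib, ← Finset.mul_sum]
  have hPN : ∑ j, (P j + N j) ≤ mtot νp νn := by
    refine Finset.single_le_sum (f := fun i => ∑ j,
      (((νp i j) (Set.Iic 0)).toReal + ((νn i j) (Set.Iic 0)).toReal)) ?_ (Finset.mem_univ i)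
    intro k _
    positivity
  have hA : ∑ j, (AP j + AN j) ≤ atot νp νn δ := by
    refine Finset.single_le_sum (f := fun i => ∑ j,
      (((νp i j) (Set.Ioc (-δ) 0)).toReal + ((νn i j) (Set.Ioc (-δ) 0)).toReal)) ?_
      (Finset.mem_univ i)
    intro k _
    positivity
  have h3 : Real.exp (-(γ * δ)) * (∑ j, (P j + N j)) + ∑ j, (AP j + AN j) ≤ 3/4 := by
    have := mul_le_mul_of_nonneg_left hPN hexp.le
    nlinarith [hsmall, hγδ]
  calc |Kop νp νn Δ t i| ≤
      E * (Real.exp (-(γ * δ)) * (∑ j, (P j + N j)) + ∑ j, (AP j + AN j)) := by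
        rw [← h2]; exact h1
    _ ≤ E * (3/4) := mul_le_mul_of_nonneg_left h3 hEpos
    _ = 3/4 * E := by ring

lemma Kop_bound (νp νn : Fin m → Fin m → Measure ℝ)
    [∀ i j, IsFiniteMeasure (νp i j)] [∀ i j, IsFiniteMeasure (νn i j)]
    {z : ℝ → Fin m → ℝ} {C : ℝ} (hC0 : 0 ≤ C) (hC : ∀ u, ‖z u‖ ≤ C) (t : ℝ) (i : Fin m) :
    |Kop νp νn z t i| ≤ C * mtot νp νn := by
  have h1 : |Kop νp νn z t i| ≤
      ∑ j, (C * (((νp i j) (Set.Iic 0)).toReal + ((νn i j) (Set.Iic 0)).toReal)) := by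
    refine (Finset.abs_sum_le_sum_abs _ _).trans (Finset.sum_le_sum fun j _ => ?_)
    calc |(∫ s in Set.Iic (0:ℝ), z (t + s) j ∂(νp i j)) -
          ∫ s in Set.Iic (0:ℝ), z (t + s) j ∂(νn i j)|
        ≤ |∫ s in Set.Iic (0:ℝ), z (t + s) j ∂(νp i j)| +
          |∫ s in Set.Iic (0:ℝ), z (t + s) j ∂(νn i j)| := abs_sub _ _
      _ ≤ C * ((νp i j) (Set.Iic 0)).toReal + C * ((νn i j) (Set.Iic 0)).toReal :=
          add_le_add (single_bound (νp i j) hC t j) (single_bound (νn i j) hC t j)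
      _ = C * (((νp i j) (Set.Iic 0)).toReal + ((νn i j) (Set.Iic 0)).toReal) := by ring
  refine h1.trans ?_
  rw [← Finset.mul_sum]
  refine mul_le_mul_of_nonneg_left ?_ hC0
  refine Finset.single_le_sum (f := fun i => ∑ j,
    (((νp i j) (Set.Iic 0)).toReal + ((νn i j) (Set.Iic 0)).toReal)) ?_ (Finset.mem_univ i)
  intro k _
  positivity

lemma Kop_cont (νp νn : Fin m → Fin m → Measure ℝ)
    [∀ i j, IsFiniteMeasure (νp i j)] [∀ i j, IsFiniteMeasure (νn i j)]
    {z : ℝ → Fin m → ℝ} (hz : Continuous z) {C : ℝ} (hC : ∀ u, ‖z u‖ ≤ C) (i : Fin m) :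
    Continuous fun t => Kop νp νn z t i := by
  apply continuous_finset_sum
  intro j _
  exact (single_cont (νp i j) hz hC j).sub (single_cont (νn i j) hz hC j)

lemma Kop_sub (νp νn : Fin m → Fin m → Measure ℝ)
    [∀ i j, IsFiniteMeasure (νp i j)] [∀ i j, IsFiniteMeasure (νn i j)]
    {x x' : ℝ → Fin m → ℝ} (hx : Continuous x) (hx' : Continuous x') {t C C' : ℝ}
    (hC : ∀ u ≤ t, ‖x u‖ ≤ C) (hC' : ∀ u ≤ t, ‖x' u‖ ≤ C') (i : Fin m) :
    Kop νp νn x t i - Kop νp νn x' t i = Kop νp νn (fun u => x u - x' u) t i := by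
  unfold Kop
  rw [← Finset.sum_sub_distrib]
  refine Finset.sum_congr rfl fun j _ => ?_
  have e1 : ∫ s in Set.Iic (0:ℝ), (fun u => x u - x' u) (t + s) j ∂(νp i j) =
      (∫ s in Set.Iic (0:ℝ), x (t + s) j ∂(νp i j)) -
      ∫ s in Set.Iic (0:ℝ), x' (t + s) j ∂(νp i j) := by
    rw [← integral_sub (integrable_slice (νp i j) hx hC j) (integrable_slice (νp i j) hx' hC' j)]
    rfl
  have e2 : ∫ s in Set.Iic (0:ℝ), (fun u => x u - x' u) (t + s) j ∂(νn i j) =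
      (∫ s in Set.Iic (0:ℝ), x (t + s) j ∂(νn i j)) -
      ∫ s in Set.Iic (0:ℝ), x' (t + s) j ∂(νn i j) := by
    rw [← integral_sub (integrable_slice (νn i j) hx hC j) (integrable_slice (νn i j) hx' hC' j)]
    rfl
  rw [e1, e2]
  ring

lemma Kop_congr (νp νn : Fin m → Fin m → Measure ℝ) {z z' : ℝ → Fin m → ℝ} (t : ℝ)
    (hzz : ∀ u ≤ t, z u = z' u) (i : Fin m) : Kop νp νn z t i = Kop νp νn z' t i := by
  unfold Kop
  refine Finset.sum_congr rfl fun j _ => ?_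
  have e : ∀ (μ : Measure ℝ), ∫ s in Set.Iic (0:ℝ), z (t + s) j ∂μ =
      ∫ s in Set.Iic (0:ℝ), z' (t + s) j ∂μ := fun μ =>
    setIntegral_congr_fun measurableSet_Iic fun s hs => by
      rw [hzz (t + s) (by simp only [Set.mem_Iic] at hs; linarith)]
  rw [e, e]

lemma uniq (νp νn : Fin m → Fin m → Measure ℝ)
    [∀ i j, IsFiniteMeasure (νp i j)] [∀ i j, IsFiniteMeasure (νn i j)]
    {γ δ : ℝ} (hγ : 0 ≤ γ) (hδ : 0 < δ)
    (hsmall : atot νp νn δ ≤ 1/2) (hγδ : Real.exp (-(γ * δ)) * mtot νp νn ≤ 1/4)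
    {Δ : ℝ → Fin m → ℝ} (hΔ : Continuous Δ) (h0 : ∀ u ≤ (0:ℝ), Δ u = 0)
    {T : ℝ} (hT : 0 ≤ T)
    (heq : ∀ t, 0 ≤ t → t ≤ T → ∀ i, Δ t i = Kop νp νn Δ t i) :
    ∀ u ≤ T, Δ u = 0 := by
  set g : ℝ → ℝ := fun u => Real.exp (-(γ * u)) * ‖Δ u‖ with hg
  have hgc : Continuous g := ((Real.continuous_exp.comp (by continuity)).mul hΔ.norm)
  obtain ⟨ts, htsmem, hmax⟩ := isCompact_Icc.exists_isMaxOn (Set.nonempty_Icc.2 hT)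
    hgc.continuousOn
  set M := g ts with hM
  have hM0 : 0 ≤ M := mul_nonneg (Real.exp_pos _).le (norm_nonneg _)
  have hcancel : ∀ u : ℝ, Real.exp (-(γ * u)) * Real.exp (γ * u) = 1 := fun u => by
    rw [← Real.exp_add]; simp
  have hb : ∀ u ≤ ts, ‖Δ u‖ ≤ Real.exp (γ * u) * M := by
    intro u hu
    rcases le_or_gt u 0 with h | h
    · rw [h0 u h]
      simp only [norm_zero]
      positivity
    · have humem : u ∈ Set.Icc (0:ℝ) T := ⟨h.le, hu.trans htsmem.2⟩
      have h2 : Real.exp (-(γ * u)) * ‖Δ u‖ ≤ M := hmax humem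
      nlinarith [hcancel u, Real.exp_pos (γ * u), norm_nonneg (Δ u), Real.exp_pos (-(γ * u))]
  have hnorm : ‖Δ ts‖ ≤ 3/4 * (Real.exp (γ * ts) * M) := by
    refine (pi_norm_le_iff_of_nonneg (by positivity)).2 fun i => ?_
    rw [Real.norm_eq_abs, heq ts htsmem.1 htsmem.2 i]
    exact Kop_est νp νn hΔ hγ hδ hM0 hb hsmall hγδ i
  have hM0' : M = 0 := by
    have h3 : M ≤ 3/4 * M := calc
      M = Real.exp (-(γ * ts)) * ‖Δ ts‖ := rfl
      _ ≤ Real.exp (-(γ * ts)) * (3/4 * (Real.exp (γ * ts) * M)) :=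
        mul_le_mul_of_nonneg_left hnorm (Real.exp_pos _).le
      _ = 3/4 * (Real.exp (-(γ * ts)) * Real.exp (γ * ts)) * M := by ring
      _ = 3/4 * M := by rw [hcancel ts]; ring
    linarith
  intro u hu
  rcases le_or_gt u 0 with h | h
  · exact h0 u h
  · have h5 : g u ≤ M := hmax ⟨h.le, hu⟩
    rw [hM0'] at h5
    have h4 : Real.exp (-(γ * u)) * ‖Δ u‖ ≤ 0 := h5
    have h6 : ‖Δ u‖ = 0 := by nlinarith [Real.exp_pos (-(γ * u)), norm_nonneg (Δ u)]
    exact norm_eq_zero.1 h6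

lemma exists_on (νp νn : Fin m → Fin m → Measure ℝ)
    [∀ i j, IsFiniteMeasure (νp i j)] [∀ i j, IsFiniteMeasure (νn i j)]
    {γ δ : ℝ} (hγ : 0 ≤ γ) (hδ : 0 < δ)
    (hsmall : atot νp νn δ ≤ 1/2) (hγδ : Real.exp (-(γ * δ)) * mtot νp νn ≤ 1/4)
    (h : ℝ → Fin m → ℝ) (hh : ContinuousOn h (Set.Ici 0))
    (φ : ℝ → Fin m → ℝ) {Cφ : ℝ} (hCφ : ∀ s ≤ (0:ℝ), ‖φ s‖ ≤ Cφ)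
    (hψc : Continuous fun t => φ (min t 0))
    (hφ0 : ∀ i, φ 0 i - Kop νp νn φ 0 i = h 0 i) (n : ℕ) :
    ∃ x : ℝ → Fin m → ℝ, Continuous x ∧ (∀ s ≤ (0:ℝ), x s = φ s) ∧
      ∀ t, 0 ≤ t → t ≤ (n:ℝ) → ∀ i, x t i - Kop νp νn x t i = h t i := by
  classical
  have hmtot : 0 ≤ mtot νp νn := by unfold mtot; positivity
  have hCφ0 : 0 ≤ Cφ := (norm_nonneg _).trans (hCφ 0 le_rfl)
  set ψ : ℝ → Fin m → ℝ := fun t => φ (min t 0) with hψ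
  have hψb : ∀ u, ‖ψ u‖ ≤ Cφ := fun u => hCφ _ (min_le_right _ _)
  set c : ℝ → ℝ := fun t => min (max t 0) (n:ℝ) with hcdef
  have hc_cont : Continuous c := (continuous_id.max continuous_const).min continuous_const
  have hc0 : ∀ t, 0 ≤ c t := fun t => le_min (le_max_right t 0) n.cast_nonneg
  have hcle : ∀ t, c t ≤ (n:ℝ) := fun t => min_le_right _ _
  have hcmono : Monotone c := fun a b hab => min_le_min (max_le_max hab le_rfl) le_rfl
  have hceq : ∀ t, 0 ≤ t → t ≤ (n:ℝ) → c t = t := by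
    intro t h1 h2; rw [hcdef]; simp only [max_eq_left h1, min_eq_left h2]
  have hcneg : ∀ t ≤ (0:ℝ), c t = 0 := by
    intro t ht; rw [hcdef]; simp only [max_eq_right ht, min_eq_left (by positivity : (0:ℝ) ≤ (n:ℝ))]
  have hcu : ∀ u, c u ≤ max u 0 := fun u => min_le_left _ _
  have hcancel : ∀ u : ℝ, Real.exp (-(γ * u)) * Real.exp (γ * u) = 1 := fun u => by
    rw [← Real.exp_add]; simp
  -- the closed subspace S
  set S : Set (BoundedContinuousFunction ℝ (Fin m → ℝ)) := {y | ∀ t ≤ (0:ℝ), y t = 0} with hS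
  have hSclosed : IsClosed S := by
    have : S = ⋂ (t : ℝ) (_ : t ≤ (0:ℝ)),
        {y : BoundedContinuousFunction ℝ (Fin m → ℝ) | y t = 0} := by
      ext y; simp [hS, Set.mem_iInter]
    rw [this]
    exact isClosed_iInter fun t => isClosed_iInter fun _ =>
      isClosed_eq (continuous_eval_const t :
        Continuous fun f : BoundedContinuousFunction ℝ (Fin m → ℝ) => f t) continuous_const
  haveI : CompleteSpace S := hSclosed.completeSpace_coe
  haveI : Nonempty S := ⟨⟨0, fun t _ => rfl⟩⟩
  -- the transform X and the map F
  set X : S → ℝ → Fin m → ℝ := fun y u => ψ u + Real.exp (γ * c u) • (y : BoundedContinuousFunction ℝ (Fin m → ℝ)) u with hXdef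
  have hXc : ∀ y, Continuous (X y) := by
    intro y
    exact hψc.add (((Real.continuous_exp.comp (continuous_const.mul hc_cont))).smul
      (y : BoundedContinuousFunction ℝ (Fin m → ℝ)).continuous)
  have hXb : ∀ y : S, ∀ u, ‖X y u‖ ≤
      Cφ + Real.exp (γ * n) * ‖(y : BoundedContinuousFunction ℝ (Fin m → ℝ))‖ := by
    intro y u
    refine (norm_add_le _ _).trans (add_le_add (hψb u) ?_)
    rw [norm_smul, Real.norm_eq_abs, abs_of_pos (Real.exp_pos _)]
    exact mul_le_mul (Real.exp_le_exp.2 (mul_le_mul_of_nonneg_left (hcle u) hγ))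
      ((y : BoundedContinuousFunction ℝ (Fin m → ℝ)).norm_coe_le_norm u) (norm_nonneg _)
      (Real.exp_pos _).le
  have hXbnn : ∀ y : S, (0:ℝ) ≤ Cφ + Real.exp (γ * n) * ‖(y : BoundedContinuousFunction ℝ (Fin m → ℝ))‖ := by
    intro y; positivity
  set F : S → ℝ → Fin m → ℝ :=
    fun y t => Real.exp (-(γ * c t)) • (h (c t) + Kop νp νn (X y) (c t) - φ 0) with hFdef
  have hKopC : ∀ y, Continuous fun t => Kop νp νn (X y) t :=
    fun y => continuous_pi fun i => Kop_cont νp νn (hXc y) (hXb y) i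
  have hFc : ∀ y, Continuous (F y) := by
    intro y
    refine ((continuous_const.mul hc_cont).neg.rexp).smul ?_
    exact ((hh.comp_continuous hc_cont hc0).add ((hKopC y).comp hc_cont)).sub continuous_const
  obtain ⟨Ch, hCh⟩ := (isCompact_Icc (a := (0:ℝ)) (b := (n:ℝ))).exists_bound_of_continuousOn
    (hh.mono fun x hx => hx.1)
  have hKopB : ∀ y : S, ∀ u, ‖Kop νp νn (X y) u‖ ≤
      (Cφ + Real.exp (γ * n) * ‖(y : BoundedContinuousFunction ℝ (Fin m → ℝ))‖) * mtot νp νn := by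
    intro y u
    refine (pi_norm_le_iff_of_nonneg (by positivity)).2 fun i => ?_
    rw [Real.norm_eq_abs]
    exact Kop_bound νp νn (hXbnn y) (hXb y) u i
  have hFb : ∀ y : S, ∀ t, ‖F y t‖ ≤
      Ch + (Cφ + Real.exp (γ * n) * ‖(y : BoundedContinuousFunction ℝ (Fin m → ℝ))‖) * mtot νp νn
        + ‖φ 0‖ := by
    intro y t
    rw [hFdef]
    simp only
    rw [norm_smul, Real.norm_eq_abs, abs_of_pos (Real.exp_pos _)]
    have he1 : Real.exp (-(γ * c t)) ≤ 1 := by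
      rw [Real.exp_le_one_iff]
      have : 0 ≤ γ * c t := mul_nonneg hγ (hc0 t)
      linarith
    have hv : ‖h (c t) + Kop νp νn (X y) (c t) - φ 0‖ ≤
        Ch + (Cφ + Real.exp (γ * n) * ‖(y : BoundedContinuousFunction ℝ (Fin m → ℝ))‖) * mtot νp νn
          + ‖φ 0‖ := by
      refine (norm_sub_le _ _).trans ?_
      refine add_le_add ((norm_add_le _ _).trans (add_le_add ?_ (hKopB y (c t)))) le_rfl
      exact hCh (c t) ⟨hc0 t, hcle t⟩
    calc Real.exp (-(γ * c t)) * ‖h (c t) + Kop νp νn (X y) (c t) - φ 0‖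
        ≤ 1 * ‖h (c t) + Kop νp νn (X y) (c t) - φ 0‖ :=
          mul_le_mul_of_nonneg_right he1 (norm_nonneg _)
      _ = ‖h (c t) + Kop νp νn (X y) (c t) - φ 0‖ := one_mul _
      _ ≤ _ := hv
  -- membership of F y in S
  have hXneg : ∀ y : S, ∀ u ≤ (0:ℝ), X y u = φ u := by
    intro y u hu
    rw [hXdef]
    simp only
    rw [hcneg u hu, y.2 u hu, smul_zero, add_zero, hψ]
    simp only [min_eq_left hu]
  have hmem : ∀ y : S, ∀ t ≤ (0:ℝ), F y t = 0 := by
    intro y t ht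
    rw [hFdef]
    simp only
    rw [hcneg t ht]
    have hK0 : Kop νp νn (X y) 0 = Kop νp νn φ 0 := by
      funext i
      exact Kop_congr νp νn 0 (fun u hu => hXneg y u hu) i
    rw [hK0]
    funext i
    simp only [mul_zero, neg_zero, Real.exp_zero, one_smul, Pi.smul_apply, Pi.add_apply,
      Pi.sub_apply, Pi.zero_apply, smul_eq_mul, one_mul]
    linarith [hφ0 i]
  -- the contraction map
  let Tmap : S → S := fun y =>
    ⟨BoundedContinuousFunction.ofNormedAddCommGroup (F y) (hFc y) _ (hFb y), hmem y⟩
  have hTcoe : ∀ (y : S) (t : ℝ), ((Tmap y : S) : BoundedContinuousFunction ℝ (Fin m → ℝ)) t = F y t :=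
    fun y t => rfl
  -- contraction estimate
  have hlip : ∀ y y' : S, dist (Tmap y) (Tmap y') ≤ 3/4 * dist y y' := by
    intro y y'
    have hD : (0:ℝ) ≤ dist y y' := dist_nonneg
    rw [Subtype.dist_eq]
    refine (BoundedContinuousFunction.dist_le (by positivity)).2 fun t => ?_
    rw [show ((Tmap y : S) : BoundedContinuousFunction ℝ (Fin m → ℝ)) = _ from rfl]
    have hDyy : dist y y' =
        dist (y : BoundedContinuousFunction ℝ (Fin m → ℝ)) (y' : BoundedContinuousFunction ℝ (Fin m → ℝ)) :=
      Subtype.dist_eq y y'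
    set D := dist y y' with hDdef
    set Δ : ℝ → Fin m → ℝ := fun u =>
      Real.exp (γ * c u) • ((y : BoundedContinuousFunction ℝ (Fin m → ℝ)) u -
        (y' : BoundedContinuousFunction ℝ (Fin m → ℝ)) u) with hΔdef
    have hΔc : Continuous Δ :=
      ((continuous_const.mul hc_cont).rexp).smul
        ((y : BoundedContinuousFunction ℝ (Fin m → ℝ)).continuous.sub
          (y' : BoundedContinuousFunction ℝ (Fin m → ℝ)).continuous)
    have hΔ0 : ∀ u ≤ (0:ℝ), Δ u = 0 := by
      intro u hu
      rw [hΔdef]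
      simp only
      rw [y.2 u hu, y'.2 u hu, sub_self, smul_zero]
    have hΔb : ∀ u, ‖Δ u‖ ≤ Real.exp (γ * u) * D := by
      intro u
      rcases le_or_gt u 0 with hu | hu
      · rw [hΔ0 u hu, norm_zero]
        positivity
      · rw [hΔdef]
        simp only
        rw [norm_smul, Real.norm_eq_abs, abs_of_pos (Real.exp_pos _)]
        have h1 : Real.exp (γ * c u) ≤ Real.exp (γ * u) := by
          refine Real.exp_le_exp.2 (mul_le_mul_of_nonneg_left ?_ hγ)
          exact (hcu u).trans (le_of_eq (max_eq_left hu.le))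
        have h2 : ‖(y : BoundedContinuousFunction ℝ (Fin m → ℝ)) u -
            (y' : BoundedContinuousFunction ℝ (Fin m → ℝ)) u‖ ≤ D := by
          rw [← dist_eq_norm, hDyy]
          exact BoundedContinuousFunction.dist_coe_le_dist u
        exact mul_le_mul h1 h2 (norm_nonneg _) (Real.exp_pos _).le
    have hXsub : ∀ u, X y u - X y' u = Δ u := by
      intro u
      rw [hXdef, hΔdef]
      simp only
      rw [smul_sub]
      abel
    have hKsub : ∀ i, Kop νp νn (X y) (c t) i - Kop νp νn (X y') (c t) i =
        Kop νp νn Δ (c t) i := by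
      intro i
      rw [Kop_sub νp νn (hXc y) (hXc y') (fun u _ => hXb y u) (fun u _ => hXb y' u) i,
        show (fun u => X y u - X y' u) = Δ from funext hXsub]
    have hFsub : F y t - F y' t = Real.exp (-(γ * c t)) • Kop νp νn Δ (c t) := by
      rw [hFdef]
      simp only
      rw [← smul_sub]
      congr 1
      funext i
      simp only [Pi.add_apply, Pi.sub_apply]
      linarith [hKsub i]
    have hKest : ‖Kop νp νn Δ (c t)‖ ≤ 3/4 * (Real.exp (γ * c t) * D) := by
      refine (pi_norm_le_iff_of_nonneg (by positivity)).2 fun i => ?_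
      rw [Real.norm_eq_abs]
      exact Kop_est νp νn hΔc hγ hδ hD (fun u _ => hΔb u) hsmall hγδ i
    calc dist (F y t) (F y' t) = ‖F y t - F y' t‖ := dist_eq_norm _ _
      _ = Real.exp (-(γ * c t)) * ‖Kop νp νn Δ (c t)‖ := by
          rw [hFsub, norm_smul, Real.norm_eq_abs, abs_of_pos (Real.exp_pos _)]
      _ ≤ Real.exp (-(γ * c t)) * (3/4 * (Real.exp (γ * c t) * D)) :=
          mul_le_mul_of_nonneg_left hKest (Real.exp_pos _).le
      _ = 3/4 * (Real.exp (-(γ * c t)) * Real.exp (γ * c t)) * D := by ring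
      _ = 3/4 * D := by rw [hcancel (c t)]; ring
  have hcontr : ContractingWith (3/4 : NNReal) Tmap := by
    constructor
    · rw [← NNReal.coe_lt_coe]
      push_cast
      norm_num
    · refine LipschitzWith.of_dist_le_mul fun y y' => ?_
      refine le_trans (hlip y y') ?_
      have : ((3/4 : NNReal) : ℝ) = 3/4 := by norm_num
      rw [this]
  set ystar := ContractingWith.fixedPoint Tmap hcontr with hystar
  have hfix : Tmap ystar = ystar := ContractingWith.fixedPoint_isFixedPt hcontr
  have hFeq : ∀ t, F ystar t = (ystar : BoundedContinuousFunction ℝ (Fin m → ℝ)) t := by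
    intro t
    conv_rhs => rw [← hfix]
    exact (hTcoe ystar t).symm
  refine ⟨X ystar, hXc ystar, fun s hs => hXneg ystar s hs, ?_⟩
  intro t h0t htn i
  have hct : c t = t := hceq t h0t htn
  have hmin : min t 0 = 0 := min_eq_right h0t
  have h1 : (ystar : BoundedContinuousFunction ℝ (Fin m → ℝ)) t =
      Real.exp (-(γ * t)) • (h t + Kop νp νn (X ystar) t - φ 0) := by
    rw [← hFeq t, hFdef]
    simp only [hct]
  have h2 : X ystar t = φ 0 + (h t + Kop νp νn (X ystar) t - φ 0) := by
    rw [hXdef]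
    simp only [hct, h1, hψ, hmin, smul_smul]
    rw [mul_comm (Real.exp (γ * t)), hcancel t, one_smul]
  have h3 := congrFun h2 i
  simp only [Pi.add_apply, Pi.sub_apply] at h3
  linarith

end AuxStatement1

/-- For every continuous `h : [0,∞) → ℝ^m` and every `φ ∈ BU`
with `Dφ = h(0)`, the nonhomogeneous problem `D x_t = h(t)` for `t ≥ 0`,
`x_0 = φ`, has a solution defined for all `t ≥ 0`. -/
theorem statement1 (m : ℕ) (νp νn : Fin m → Fin m → Measure ℝ)
    (hν : NuCond m νp νn)
    (h : ℝ → Fin m → ℝ) (hh : ContinuousOn h (Set.Ici 0))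
    (φ : ℝ → Fin m → ℝ) (hφ : IsBU m φ)
    (hφ0 : Dop m νp νn φ = h 0) :
    ∃ x : ℝ → Fin m → ℝ, Continuous x ∧ (∀ s : ℝ, s ≤ 0 → x s = φ s) ∧
      ∀ t : ℝ, 0 ≤ t → Dop m νp νn (shift m x t) = h t := by
  classical
  haveI instp : ∀ i j, IsFiniteMeasure (νp i j) := fun i j => ⟨(hν.1 i j).lt_top⟩
  haveI instn : ∀ i j, IsFiniteMeasure (νn i j) := fun i j => ⟨(hν.2.1 i j).lt_top⟩
  have hDopeq : ∀ (x : ℝ → Fin m → ℝ) (t : ℝ) (i : Fin m),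
      Dop m νp νn (shift m x t) i = x t i - Kop νp νn x t i := by
    intro x t i
    simp [Dop, shift, Kop]
  -- bound and continuity data for φ
  obtain ⟨Cφ, hCφ⟩ := hφ.1
  have hψc : Continuous fun t => φ (min t 0) := by
    rw [Metric.continuous_iff]
    intro b ε hε
    obtain ⟨d, hd, hprop⟩ := hφ.2 ε hε
    refine ⟨d, hd, fun a hab => ?_⟩
    rw [dist_eq_norm]
    refine hprop (min a 0) (min_le_right _ _) (min b 0) (min_le_right _ _) ?_
    rw [Real.dist_eq] at hab
    exact lt_of_le_of_lt (min_lip a b) hab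
  -- choice of δ
  have hμlim : ∀ (μ : Measure ℝ), IsFiniteMeasure μ → μ {0} = 0 →
      Tendsto (fun k : ℕ => (μ (Set.Ioc (-(1/((k:ℝ)+1))) 0)).toReal) atTop (nhds 0) := by
    intro μ hfin h0
    have hanti : Antitone fun k : ℕ => Set.Ioc (-(1/((k:ℝ)+1))) (0:ℝ) := by
      intro a b hab
      refine Set.Ioc_subset_Ioc (neg_le_neg ?_) le_rfl
      apply one_div_le_one_div_of_le
      · positivity
      · exact_mod_cast add_le_add_left (Nat.cast_le.2 hab) 1
    have hinter : (⋂ k : ℕ, Set.Ioc (-(1/((k:ℝ)+1))) (0:ℝ)) = {0} := by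
      ext x
      simp only [Set.mem_iInter, Set.mem_Ioc, Set.mem_singleton_iff]
      constructor
      · rintro hx
        rcases lt_or_eq_of_le (hx 0).2 with hlt | heq
        · exfalso
          obtain ⟨k, hk⟩ := exists_nat_one_div_lt (show (0:ℝ) < -x by linarith)
          have := (hx k).1
          linarith
        · exact heq
      · rintro rfl k
        constructor
        · have : (0:ℝ) < 1/((k:ℝ)+1) := by positivity
          linarith
        · exact le_rfl
    have h1 : Tendsto (fun k : ℕ => μ (Set.Ioc (-(1/((k:ℝ)+1))) 0)) atTop (nhds 0) := by
      have := tendsto_measure_iInter_atTop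
        (μ := μ) (s := fun k : ℕ => Set.Ioc (-(1/((k:ℝ)+1))) (0:ℝ))
        (fun k => measurableSet_Ioc.nullMeasurableSet) hanti ⟨0, (measure_lt_top μ _).ne⟩
      rw [hinter, h0] at this
      exact this
    have h2 := (ENNReal.tendsto_toReal (by simp : (0 : ENNReal) ≠ ⊤)).comp h1
    exact h2
  have hsumlim : Tendsto (fun k : ℕ => atot νp νn (1/((k:ℝ)+1))) atTop (nhds 0) := by
    have := tendsto_finset_sum (Finset.univ : Finset (Fin m)) fun i _ =>
      tendsto_finset_sum (Finset.univ : Finset (Fin m)) fun j _ =>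
        ((hμlim (νp i j) (instp i j) (hν.2.2.1 i j)).add
          (hμlim (νn i j) (instn i j) (hν.2.2.2 i j)))
    simpa [atot] using this
  obtain ⟨k, hk⟩ := (hsumlim.eventually_lt_const (by norm_num : (0:ℝ) < 1/2)).exists
  set δ : ℝ := 1/((k:ℝ)+1) with hδdef
  have hδ : 0 < δ := by positivity
  have hsmall : atot νp νn δ ≤ 1/2 := hk.le
  -- choice of γ
  have hmtot : 0 ≤ mtot νp νn := by unfold mtot; positivity
  set γ : ℝ := Real.log (4*(mtot νp νn + 1)) / δ with hγdef
  have hγ : 0 ≤ γ := div_nonneg (Real.log_nonneg (by linarith)) hδ.le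
  have hγδ : Real.exp (-(γ * δ)) * mtot νp νn ≤ 1/4 := by
    have hA : (0:ℝ) < 4*(mtot νp νn + 1) := by linarith
    have h1 : γ * δ = Real.log (4*(mtot νp νn + 1)) := by
      rw [hγdef]
      field_simp
    rw [h1, Real.exp_neg, Real.exp_log hA]
    rw [inv_mul_le_iff₀ hA]
    linarith
  -- compatibility at 0
  have hφ0' : ∀ i, φ 0 i - Kop νp νn φ 0 i = h 0 i := by
    intro i
    have := congrFun hφ0 i
    simpa [Dop, Kop] using this
  -- solutions on [0, n] for every n
  have hex : ∀ n : ℕ, ∃ x : ℝ → Fin m → ℝ, Continuous x ∧ (∀ s ≤ (0:ℝ), x s = φ s) ∧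
      ∀ t, 0 ≤ t → t ≤ (n:ℝ) → ∀ i, x t i - Kop νp νn x t i = h t i :=
    fun n => exists_on νp νn hγ hδ hsmall hγδ h hh φ hCφ hψc hφ0' n
  choose Y hYc hY0 hYeq using hex
  -- solutions are bounded on half-lines
  have hbd : ∀ (n : ℕ) (T : ℝ), ∃ C, ∀ u ≤ T, ‖Y n u‖ ≤ C := by
    intro n T
    obtain ⟨C1, hC1⟩ := (isCompact_Icc (a := (0:ℝ)) (b := T)).exists_bound_of_continuousOn
      (hYc n).continuousOn
    refine ⟨max Cφ C1, fun u hu => ?_⟩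
    rcases le_or_gt u 0 with h' | h'
    · rw [hY0 n u h']
      exact (hCφ u h').trans (le_max_left _ _)
    · exact (hC1 u ⟨h'.le, hu⟩).trans (le_max_right _ _)
  -- agreement of solutions
  have hagree : ∀ (a b : ℕ), a ≤ b → ∀ u ≤ ((a:ℕ):ℝ), Y a u = Y b u := by
    intro a b hab
    have hΔc : Continuous fun u => Y a u - Y b u := (hYc a).sub (hYc b)
    have hΔ0 : ∀ u ≤ (0:ℝ), Y a u - Y b u = 0 := by
      intro u hu
      rw [hY0 a u hu, hY0 b u hu, sub_self]
    have heqn : ∀ t, 0 ≤ t → t ≤ ((a:ℕ):ℝ) →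
        ∀ i, (fun u => Y a u - Y b u) t i = Kop νp νn (fun u => Y a u - Y b u) t i := by
      intro t h0t hta i
      obtain ⟨Ca, hCa⟩ := hbd a t
      obtain ⟨Cb, hCb⟩ := hbd b t
      have e1 := hYeq a t h0t hta i
      have e2 := hYeq b t h0t (hta.trans (Nat.cast_le.2 hab)) i
      have e3 := Kop_sub νp νn (hYc a) (hYc b) hCa hCb (t := t) i
      simp only [Pi.sub_apply]
      linarith
    have := uniq νp νn hγ hδ hsmall hγδ hΔc hΔ0 (T := ((a:ℕ):ℝ)) (Nat.cast_nonneg a) heqn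
    intro u hu
    have h5 := this u hu
    have h6 := congrFun h5
    funext i
    have := h6 i
    simp only [Pi.sub_apply, Pi.zero_apply] at this
    linarith
  -- the glued solution
  set x : ℝ → Fin m → ℝ := fun t => Y (⌈t⌉₊ + 1) t with hxdef
  have hceil : ∀ t : ℝ, t ≤ ((⌈t⌉₊ + 1 : ℕ):ℝ) := by
    intro t
    push_cast
    linarith [Nat.le_ceil t]
  have hxa : ∀ (n : ℕ) (t : ℝ), t ≤ ((n:ℕ):ℝ) → x t = Y n t := by
    intro n t ht
    have h1 : x t = Y (max n (⌈t⌉₊ + 1)) t := by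
      rw [hxdef]
      exact hagree _ _ (le_max_right _ _) t (hceil t)
    have h2 : Y n t = Y (max n (⌈t⌉₊ + 1)) t :=
      hagree _ _ (le_max_left _ _) t ht
    rw [h1, h2]
  refine ⟨x, ?_, ?_, ?_⟩
  · rw [continuous_iff_continuousAt]
    intro t₀
    have hn : t₀ + 1 ≤ ((⌈t₀⌉₊ + 1 : ℕ):ℝ) := by
      push_cast
      linarith [Nat.le_ceil t₀]
    refine (hYc (⌈t₀⌉₊ + 1)).continuousAt.congr ?_
    refine Filter.eventuallyEq_of_mem (Iio_mem_nhds (lt_add_one t₀)) fun t ht => ?_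
    exact (hxa (⌈t₀⌉₊ + 1) t (le_trans (le_of_lt ht) hn)).symm
  · intro s hs
    exact hY0 _ s hs
  · intro t ht
    set n : ℕ := ⌈t⌉₊ + 1 with hn
    have htn : t ≤ ((n:ℕ):ℝ) := hceil t
    funext i
    rw [hDopeq x t i]
    have e1 : x t i = Y n t i := by rw [hxa n t htn]
    have e2 : Kop νp νn x t i = Kop νp νn (Y n) t i :=
      Kop_congr νp νn t (fun u hu => hxa n u (hu.trans htn)) i
    rw [e1, e2]
    exact hYeq n t ht htn i
end

section
/- Given T > 0, there exist positive constants k_T^1, k_T^2, depending only on D and T, such that: for every continuous h: [0,∞) → ℝ^m, every φ ∈ BU with Dφ = h(0), and every continuous x: ℝ → ℝ^m with x_0 = φ and Dx_t = h(t) for all t ≥ 0, one has ‖x_t‖_∞ ≤ k_T^1 · sup_{0≤u≤t} ‖h(u)‖ + k_T^2 · ‖φ‖_∞ for each t ∈ [0,T]. -/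
open MeasureTheory Filter Set

open Topology

/-! Since `|ν_ij|({0}) = 0`, there is `r > 0` with `∑ⱼ |ν_ij|((-r, 0]) ≤ 1/2` for every `i`.
Solving `D x_u = h(u)` for `x(u)` and splitting the integral at `-r` then gives, for
`M(u) = ‖x_u‖_∞` and the total variation `V` of `ν`,
`M(u) ≤ 2 (‖φ‖_∞ + sup_{[0,t]} ‖h‖) + 2 V M(u - r)` whenever `0 < u ≤ t`:
the contribution of `(-r, 0]` is at most `M(u) / 2` and is absorbed into the left-hand side.
Iterating over `⌈T / r⌉` steps of length `r` yields `k_T^1 = k_T^2 = (2 + 2V)^⌈T / r⌉`. -/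

lemma tendsto_measureReal_Ioc_neg_nhdsGT_zero (μ : Measure ℝ) [IsFiniteMeasure μ]
    (h0 : μ {0} = 0) : Tendsto (fun r => μ.real (Ioc (-r) 0)) (𝓝[>] 0) (𝓝 0) := by
  have hinter : ⋂ r > (0 : ℝ), Ioc (-r) 0 = {0} := by
    ext s
    simp only [mem_iInter, mem_Ioc, mem_singleton_iff]
    refine ⟨fun hs => le_antisymm (hs 1 one_pos).2 ?_, fun hs r hr => by subst hs; simpa using hr⟩
    by_contra! hneg
    linarith [(hs (-s) (neg_pos.2 hneg)).1]
  have hlim := tendsto_measure_biInter_gt (μ := μ) (s := fun r : ℝ => Ioc (-r) 0) (a := 0)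
    (fun r _ => measurableSet_Ioc.nullMeasurableSet)
    (fun _ _ _ hij => Ioc_subset_Ioc_left (neg_le_neg hij)) ⟨1, one_pos, measure_ne_top _ _⟩
  rw [hinter, h0] at hlim
  exact (ENNReal.tendsto_toReal ENNReal.zero_ne_top).comp hlim

lemma norm_setIntegral_Iic_le {μ : Measure ℝ} [IsFiniteMeasure μ] {f : ℝ → ℝ}
    (hf : AEStronglyMeasurable f μ) {r A B : ℝ} (hr : 0 ≤ r) (hB0 : 0 ≤ B)
    (hA : ∀ s ∈ Ioc (-r) 0, ‖f s‖ ≤ A) (hB : ∀ s ∈ Iic (-r), ‖f s‖ ≤ B) :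
    ‖∫ s in Iic 0, f s ∂μ‖ ≤ A * μ.real (Ioc (-r) 0) + B * μ.real univ := by
  have hbdd : ∀ s ∈ Iic (0 : ℝ), ‖f s‖ ≤ max A B := by
    intro s hs
    rcases lt_or_ge (-r) s with hrs | hrs
    · exact (hA s ⟨hrs, hs⟩).trans (le_max_left _ _)
    · exact (hB s hrs).trans (le_max_right _ _)
  have hint : IntegrableOn f (Iic 0) μ :=
    Measure.integrableOn_of_bounded (measure_ne_top _ _) hf
      (ae_restrict_of_forall_mem measurableSet_Iic hbdd)
  rw [← Iic_union_Ioc_eq_Iic (neg_nonpos.2 hr), setIntegral_union (Iic_disjoint_Ioc le_rfl)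
    measurableSet_Ioc (hint.mono_set (Iic_subset_Iic.2 (neg_nonpos.2 hr)))
    (hint.mono_set Ioc_subset_Iic_self)]
  calc ‖(∫ s in Iic (-r), f s ∂μ) + ∫ s in Ioc (-r) 0, f s ∂μ‖
      ≤ B * μ.real (Iic (-r)) + A * μ.real (Ioc (-r) 0) :=
        (norm_add_le _ _).trans (add_le_add
          (norm_setIntegral_le_of_norm_le_const (measure_lt_top _ _) hB)
          (norm_setIntegral_le_of_norm_le_const (measure_lt_top _ _) hA))
    _ ≤ A * μ.real (Ioc (-r) 0) + B * μ.real univ := by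
        have := mul_le_mul_of_nonneg_left (measureReal_mono (μ := μ) (subset_univ (Iic (-r)))) hB0
        linarith

lemma le_pow_mul_of_le_delay {M : ℝ → ℝ} {r t E b : ℝ} (hr : 0 ≤ r) (hb : 0 ≤ b) (hE : 0 ≤ E)
    (hpast : ∀ u ≤ 0, M u ≤ E) (hstep : ∀ u, 0 < u → u ≤ t → M u ≤ 2 * E + b * M (u - r))
    (k : ℕ) {u : ℝ} (hut : u ≤ t) (huk : u ≤ k * r) : M u ≤ (2 + b) ^ k * E := by
  induction k generalizing u with
  | zero => simpa using hpast u (by simpa using huk)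
  | succ k ih =>
    rcases le_or_gt u 0 with hu | hu
    · exact (hpast u hu).trans (le_mul_of_one_le_left hE (one_le_pow₀ (by linarith)))
    · calc M u ≤ 2 * E + b * M (u - r) := hstep u hu hut
        _ ≤ 2 * E + b * ((2 + b) ^ k * E) := by
          gcongr; exact ih (by linarith) (by push_cast at huk; linarith)
        _ ≤ (2 + b) ^ (k + 1) * E := by
          have : 1 ≤ (2 + b) ^ k := one_le_pow₀ (by linarith)
          rw [pow_succ]; nlinarith

lemma norm_le_supNorm {m : ℕ} {x : ℝ → Fin m → ℝ} {C : ℝ} (hC : ∀ s ≤ 0, ‖x s‖ ≤ C)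
    {s : ℝ} (hs : s ≤ 0) : ‖x s‖ ≤ supNorm m x :=
  le_ciSup (f := fun s : Iic (0 : ℝ) => ‖x s‖) ⟨C, by rintro _ ⟨s, rfl⟩; exact hC s s.2⟩ ⟨s, hs⟩

lemma supNorm_le {m : ℕ} {x : ℝ → Fin m → ℝ} {C : ℝ} (hC : ∀ s ≤ 0, ‖x s‖ ≤ C) :
    supNorm m x ≤ C :=
  have : Nonempty (Iic (0 : ℝ)) := nonempty_Iic.to_subtype
  ciSup_le fun s => hC s s.2

lemma norm_le_supOn {m : ℕ} {h : ℝ → Fin m → ℝ} {t : ℝ} (hh : ContinuousOn h (Icc 0 t))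
    {u : ℝ} (hu : u ∈ Icc 0 t) : ‖h u‖ ≤ supOn m h t := by
  obtain ⟨C, hC⟩ := isCompact_Icc.exists_bound_of_continuousOn hh
  exact le_ciSup (f := fun u : Icc (0 : ℝ) t => ‖h u‖) ⟨C, by rintro _ ⟨u, rfl⟩; exact hC u u.2⟩
    ⟨u, hu⟩

lemma supNorm_nonneg (m : ℕ) (x : ℝ → Fin m → ℝ) : 0 ≤ supNorm m x :=
  Real.iSup_nonneg fun _ => norm_nonneg _

lemma supOn_nonneg (m : ℕ) (h : ℝ → Fin m → ℝ) (t : ℝ) : 0 ≤ supOn m h t :=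
  Real.iSup_nonneg fun _ => norm_nonneg _

section Dop

variable {m : ℕ} {νp νn : Fin m → Fin m → Measure ℝ}

/-- The mass of the `i`-th row of `|ν|` on `(-r, 0]`. -/
noncomputable def nearMass (νp νn : Fin m → Fin m → Measure ℝ) (r : ℝ) (i : Fin m) : ℝ :=
  ∑ j, ((νp i j).real (Ioc (-r) 0) + (νn i j).real (Ioc (-r) 0))

noncomputable def totalMass (νp νn : Fin m → Fin m → Measure ℝ) : ℝ :=
  ∑ i, ∑ j, ((νp i j).real univ + (νn i j).real univ)

lemma totalMass_nonneg : 0 ≤ totalMass νp νn := by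
  unfold totalMass; positivity

lemma exists_pos_nearMass_le [∀ i j, IsFiniteMeasure (νp i j)] [∀ i j, IsFiniteMeasure (νn i j)]
    (hp0 : ∀ i j, νp i j {0} = 0) (hn0 : ∀ i j, νn i j {0} = 0) {ε : ℝ} (hε : 0 < ε) :
    ∃ r > 0, ∀ i, nearMass νp νn r i ≤ ε := by
  have hlim : ∀ i, Tendsto (fun r => nearMass νp νn r i) (𝓝[>] 0) (𝓝 0) := fun i => by
    simpa [nearMass] using tendsto_finsetSum Finset.univ fun j _ =>
      (tendsto_measureReal_Ioc_neg_nhdsGT_zero _ (hp0 i j)).add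
        (tendsto_measureReal_Ioc_neg_nhdsGT_zero _ (hn0 i j))
  obtain ⟨r, hr, hsmall⟩ := (eventually_mem_nhdsWithin.and
    (eventually_all.2 fun i => (hlim i).eventually (eventually_le_nhds hε))).exists
  exact ⟨r, hr, hsmall⟩

lemma norm_le_norm_Dop_add [∀ i j, IsFiniteMeasure (νp i j)] [∀ i j, IsFiniteMeasure (νn i j)]
    {x : ℝ → Fin m → ℝ} (hx : Continuous x) {r ε A B : ℝ} (hr : 0 < r) (hε : 0 ≤ ε)
    (hB0 : 0 ≤ B) (hsmall : ∀ i, nearMass νp νn r i ≤ ε)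
    (hA : ∀ s ∈ Ioc (-r) 0, ‖x s‖ ≤ A) (hB : ∀ s ∈ Iic (-r), ‖x s‖ ≤ B) :
    ‖x 0‖ ≤ ‖Dop m νp νn x‖ + ε * A + totalMass νp νn * B := by
  have hA0 : 0 ≤ A := (norm_nonneg _).trans (hA 0 ⟨neg_lt_zero.2 hr, le_rfl⟩)
  have hint : ∀ (μ : Measure ℝ) [IsFiniteMeasure μ] j,
      ‖∫ s in Iic 0, x s j ∂μ‖ ≤ A * μ.real (Ioc (-r) 0) + B * μ.real univ := fun μ _ j =>
    norm_setIntegral_Iic_le ((continuous_apply j).comp hx).aestronglyMeasurable hr.le hB0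
      (fun s hs => (norm_le_pi_norm _ j).trans (hA s hs))
      (fun s hs => (norm_le_pi_norm _ j).trans (hB s hs))
  refine (pi_norm_le_iff_of_nonneg (by positivity [totalMass_nonneg (νp := νp) (νn := νn)])).2
    fun i => ?_
  have hrow : ∑ j, ((νp i j).real univ + (νn i j).real univ) ≤ totalMass νp νn :=
    Finset.single_le_sum (f := fun i => ∑ j, ((νp i j).real univ + (νn i j).real univ))
      (fun _ _ => by positivity) (Finset.mem_univ i)
  calc ‖x 0 i‖
      = ‖Dop m νp νn x i + ∑ j, ((∫ s in Iic 0, x s j ∂(νp i j)) - ∫ s in Iic 0, x s j ∂(νn i j))‖ := by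
        simp [Dop]
    _ ≤ ‖Dop m νp νn x‖ + ∑ j, (‖∫ s in Iic 0, x s j ∂(νp i j)‖ + ‖∫ s in Iic 0, x s j ∂(νn i j)‖) :=
        (norm_add_le _ _).trans (add_le_add (norm_le_pi_norm _ i)
          ((norm_sum_le _ _).trans (Finset.sum_le_sum fun j _ => norm_sub_le _ _)))
    _ ≤ ‖Dop m νp νn x‖ + ∑ j, ((A * (νp i j).real (Ioc (-r) 0) + B * (νp i j).real univ)
          + (A * (νn i j).real (Ioc (-r) 0) + B * (νn i j).real univ)) := by
        gcongr with j <;> exact hint _ j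
    _ = ‖Dop m νp νn x‖ + A * nearMass νp νn r i
          + B * ∑ j, ((νp i j).real univ + (νn i j).real univ) := by
        simp only [nearMass, Finset.mul_sum, add_assoc, ← Finset.sum_add_distrib]
        exact congrArg _ (Finset.sum_congr rfl fun j _ => by ring)
    _ ≤ ‖Dop m νp νn x‖ + ε * A + totalMass νp νn * B := by
        nlinarith [mul_le_mul_of_nonneg_left (hsmall i) hA0, mul_le_mul_of_nonneg_left hrow hB0]

end Dop

section Solution

variable {m : ℕ} {x : ℝ → Fin m → ℝ} (hx : Continuous x) (hpast : ∃ C, ∀ s ≤ 0, ‖x s‖ ≤ C)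
include hx hpast

lemma exists_bound_Iic (u : ℝ) : ∃ C, ∀ s ≤ u, ‖x s‖ ≤ C := by
  obtain ⟨C₁, hC₁⟩ := hpast
  obtain ⟨C₂, hC₂⟩ := isCompact_Icc.exists_bound_of_continuousOn (hx.continuousOn (s := Icc 0 u))
  refine ⟨max C₁ C₂, fun s hs => ?_⟩
  rcases le_or_gt s 0 with h0 | h0
  · exact (hC₁ s h0).trans (le_max_left _ _)
  · exact (hC₂ s ⟨h0.le, hs⟩).trans (le_max_right _ _)

lemma norm_le_supNorm_shift {s u : ℝ} (hs : s ≤ u) : ‖x s‖ ≤ supNorm m (shift m x u) := by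
  obtain ⟨C, hC⟩ := exists_bound_Iic hx hpast u
  simpa [shift] using norm_le_supNorm (x := shift m x u) (fun s hs => hC _ (by linarith))
    (show s - u ≤ 0 by linarith)

lemma supNorm_shift_mono {u v : ℝ} (huv : u ≤ v) :
    supNorm m (shift m x u) ≤ supNorm m (shift m x v) :=
  supNorm_le fun s hs => norm_le_supNorm_shift hx hpast (by linarith)

lemma supNorm_shift_le_delay {νp νn : Fin m → Fin m → Measure ℝ} [∀ i j, IsFiniteMeasure (νp i j)]
    [∀ i j, IsFiniteMeasure (νn i j)] {r t H : ℝ} (hr : 0 < r)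
    (hsmall : ∀ i, nearMass νp νn r i ≤ 1 / 2)
    (hH : ∀ u ∈ Icc 0 t, ‖Dop m νp νn (shift m x u)‖ ≤ H) {u : ℝ} (hu : 0 < u) (hut : u ≤ t) :
    supNorm m (shift m x u) ≤
      2 * (supNorm m x + H) + 2 * totalMass νp νn * supNorm m (shift m x (u - r)) := by
  set M := fun v => supNorm m (shift m x v)
  have hV := totalMass_nonneg (νp := νp) (νn := νn)
  have hpoint : ∀ v ∈ Icc 0 t, ‖x v‖ ≤ H + 1 / 2 * M v + totalMass νp νn * M (v - r) := by
    intro v hv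
    have := norm_le_norm_Dop_add (x := shift m x v) (hx.comp (continuous_const_add v)) hr
      (by norm_num) (supNorm_nonneg _ _) hsmall
      (fun s hs => norm_le_supNorm_shift hx hpast (u := v) (by linarith [hs.2]))
      (fun s hs => norm_le_supNorm_shift hx hpast (u := v - r) (by linarith [mem_Iic.1 hs]))
    simp only [shift, add_zero] at this
    linarith [hH v hv]
  obtain ⟨C, hC⟩ := hpast
  have hH0 : 0 ≤ H := (norm_nonneg _).trans (hH u ⟨hu.le, hut⟩)
  have hMu : M u ≤ supNorm m x + H + 1 / 2 * M u + totalMass νp νn * M (u - r) := by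
    refine supNorm_le fun s hs => ?_
    have hMu0 : 0 ≤ M u := supNorm_nonneg _ _
    have hMr0 : 0 ≤ M (u - r) := supNorm_nonneg _ _
    rcases le_or_gt (u + s) 0 with h0 | h0
    · have := norm_le_supNorm hC h0
      have := mul_nonneg hV hMr0
      simp only [shift]
      linarith
    · have := hpoint (u + s) ⟨h0.le, by linarith⟩
      have h1 : M (u + s) ≤ M u := supNorm_shift_mono hx ⟨C, hC⟩ (by linarith)
      have h2 : M (u + s - r) ≤ M (u - r) := supNorm_shift_mono hx ⟨C, hC⟩ (by linarith)
      have h3 := mul_le_mul_of_nonneg_left h2 hV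
      have := supNorm_nonneg m x
      simp only [shift]
      linarith
  linarith

end Solution

theorem statement2_general (m : ℕ) (νp νn : Fin m → Fin m → Measure ℝ)
    (hν : NuCond m νp νn) (T : ℝ) :
    ∃ k1 : ℝ, 0 < k1 ∧ ∃ k2 : ℝ, 0 < k2 ∧
      ∀ h : ℝ → Fin m → ℝ, ContinuousOn h (Set.Ici 0) →
      ∀ φ x : ℝ → Fin m → ℝ, IsBU m φ → Dop m νp νn φ = h 0 →
        Continuous x → (∀ s : ℝ, s ≤ 0 → x s = φ s) →
        (∀ t : ℝ, 0 ≤ t → Dop m νp νn (shift m x t) = h t) →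
        ∀ t : ℝ, 0 ≤ t → t ≤ T →
          supNorm m (shift m x t) ≤ k1 * supOn m h t + k2 * supNorm m φ := by
  obtain ⟨hpf, hnf, hp0, hn0⟩ := hν
  have _ : ∀ i j, IsFiniteMeasure (νp i j) := fun i j => ⟨(hpf i j).lt_top⟩
  have _ : ∀ i j, IsFiniteMeasure (νn i j) := fun i j => ⟨(hnf i j).lt_top⟩
  obtain ⟨r, hr, hsmall⟩ := exists_pos_nearMass_le hp0 hn0 one_half_pos
  obtain ⟨N, hN⟩ := exists_nat_ge (T / r)
  have hV := totalMass_nonneg (νp := νp) (νn := νn)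
  have hq : 0 < (2 + 2 * totalMass νp νn) ^ N := by positivity
  refine ⟨_, hq, _, hq, fun h hh φ x hφ _ hx hxφ hDx t _ htT => ?_⟩
  obtain ⟨C, hC⟩ := hφ.1
  have hpast : ∀ s ≤ 0, ‖x s‖ ≤ C := fun s hs => hxφ s hs ▸ hC s hs
  have hxφ' : supNorm m x = supNorm m φ := iSup_congr fun s => by rw [hxφ s s.2]
  have hH : ∀ u ∈ Icc 0 t, ‖Dop m νp νn (shift m x u)‖ ≤ supOn m h t := fun u hu =>
    hDx u hu.1 ▸ norm_le_supOn (hh.mono fun _ hv => hv.1) hu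
  have hinit : ∀ u ≤ 0, supNorm m (shift m x u) ≤ supNorm m x + supOn m h t := fun u hu =>
    supNorm_le fun s hs => (norm_le_supNorm hpast (by linarith)).trans
      (le_add_of_nonneg_right (supOn_nonneg m h t))
  have := le_pow_mul_of_le_delay (M := fun u => supNorm m (shift m x u)) hr.le (by positivity)
    (add_nonneg (supNorm_nonneg m x) (supOn_nonneg m h t)) hinit
    (fun u hu hut => supNorm_shift_le_delay hx ⟨C, hpast⟩ hr hsmall hH hu hut)
    N le_rfl (htT.trans ((div_le_iff₀ hr).1 hN))
  rw [hxφ'] at this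
  linarith

/-- Given `T > 0` there are positive constants `k_T^1`, `k_T^2`
(depending only on `D` and `T`) such that any solution `x` of the
nonhomogeneous problem `D x_t = h(t)`, `x_0 = φ`, satisfies
`‖x_t‖_∞ ≤ k_T^1 sup_{0 ≤ u ≤ t} ‖h(u)‖ + k_T^2 ‖φ‖_∞` for each `t ∈ [0,T]`. -/
theorem statement2 (m : ℕ) (νp νn : Fin m → Fin m → Measure ℝ)
    (hν : NuCond m νp νn) (T : ℝ) (hT : 0 < T) :
    ∃ k1 : ℝ, 0 < k1 ∧ ∃ k2 : ℝ, 0 < k2 ∧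
      ∀ h : ℝ → Fin m → ℝ, ContinuousOn h (Set.Ici 0) →
      ∀ φ x : ℝ → Fin m → ℝ, IsBU m φ → Dop m νp νn φ = h 0 →
        Continuous x → (∀ s : ℝ, s ≤ 0 → x s = φ s) →
        (∀ t : ℝ, 0 ≤ t → Dop m νp νn (shift m x t) = h t) →
        ∀ t : ℝ, 0 ≤ t → t ≤ T →
          supNorm m (shift m x t) ≤ k1 * supOn m h t + k2 * supNorm m φ :=
  statement2_general m νp νn hν T
end
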